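/- For $m > 2$ odd, the distance spectrum of $K_{(m-1)n, n, \ldots, n}$ (with $m$ parts of size $n$; the non-commuting graph of $M_{2mn}$) consists of $-2$ with multiplicity $2mn - (m+n) - 1$, $n-2$ with multiplicity $m-1$, and the two simple eigenvalues $\frac{-(4+n-3mn) \pm n\sqrt{5m^2-10m+9}}{2}$. -/

import Mathlib

/-!
In a complete multipartite graph with at least two parts, all nonempty, two distinct vertices are
at distance 2 if they share a part and 1 otherwise. Hence `r • 1 - D = A - J`, where `J` is the
all-ones matrix and `A` is block diagonal with blocks `(r + 2) • 1 - J`. The matrix `A` sends the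
vector `w`, equal to `(r + 2 - kᵢ)⁻¹` on the part of size `kᵢ`, to the all-ones vector, so
`A - J = A * (1 - w 1ᵀ)` and the matrix determinant lemma gives
`det (r • 1 - D) = ∏ᵢ (r + 2) ^ (kᵢ - 1) * (r + 2 - kᵢ) * (1 - ∑ᵢ kᵢ / (r + 2 - kᵢ))`
whenever no denominator vanishes. For the part sizes `(m - 1) n, n, …, n` this agrees with the
claimed factorization at all but finitely many `r`.
-/

open Polynomial

/-- The distance matrix of a graph, with real entries. -/
noncomputable def distMatrix {V : Type*} [Fintype V] (G : SimpleGraph V) : Matrix V V ℝ :=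
  Matrix.of fun u v => (G.dist u v : ℝ)

namespace Matrix

variable {R : Type*} [CommRing R] {n : Type*} [Fintype n] [DecidableEq n]

theorem det_sub_ones_of_mulVec_eq_one {A : Matrix n n R} {w : n → R} (hw : A *ᵥ w = 1) :
    (A - of fun _ _ => 1).det = A.det * (1 - ∑ i, w i) := by
  have hfactor : A - of (fun _ _ => 1) =
      A * (1 + replicateCol Unit (-w) * replicateRow Unit (fun _ => (1 : R))) := by
    rw [Matrix.mul_add, Matrix.mul_one, ← Matrix.mul_assoc, ← replicateCol_mulVec, mulVec_neg, hw]
    ext i j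
    simp [sub_eq_add_neg, Matrix.mul_apply]
  rw [hfactor, det_mul, det_one_add_replicateCol_mul_replicateRow]
  simp [dotProduct, sub_eq_add_neg]

theorem det_blockDiagonal' {ι : Type*} [Fintype ι] [DecidableEq ι] {V : ι → Type*}
    [∀ i, Fintype (V i)] [∀ i, DecidableEq (V i)] (M : ∀ i, Matrix (V i) (V i) R) :
    (blockDiagonal' M).det = ∏ i, (M i).det := by
  let _ : LinearOrder ι := LinearOrder.lift' _ (Fintype.equivFin ι).injective
  rw [(blockTriangular_blockDiagonal' M).det_fintype]
  refine Finset.prod_congr rfl fun i _ => ?_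
  rw [← det_reindex_self (Equiv.sigmaSubtype i)]
  congr 1
  ext x y
  exact blockDiagonal'_apply_eq M i x y

theorem det_smul_one_sub_ones {K : Type*} [Field K] [Nonempty n] {a : K} (ha : a ≠ 0) :
    (a • 1 - of fun _ _ : n => (1 : K)).det = a ^ (Fintype.card n - 1) * (a - Fintype.card n) := by
  rw [det_sub_ones_of_mulVec_eq_one (w := fun _ => a⁻¹)
    (by ext; simp [mulVec, dotProduct, Matrix.one_apply, ha]), det_smul, det_one]
  obtain ⟨k, hk⟩ := Nat.exists_eq_add_one.2 (Fintype.card_pos (α := n))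
  simp only [Finset.sum_const, Finset.card_univ, hk, nsmul_eq_mul]
  field_simp
  push_cast
  ring

end Matrix

theorem SimpleGraph.completeMultipartiteGraph_dist {ι : Type*} {V : ι → Type*} [Nontrivial ι]
    [∀ i, Nonempty (V i)] [DecidableEq ι] [∀ i, DecidableEq (V i)] (u v : Σ i, V i) :
    (completeMultipartiteGraph V).dist u v = if u = v then 0 else if u.1 = v.1 then 2 else 1 := by
  split_ifs with huv hpart
  · rw [huv, dist_self]
  · obtain ⟨j, hj⟩ := exists_ne u.1
    have hcommon : ((completeMultipartiteGraph V).commonNeighbors u v).Nonempty :=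
      ⟨⟨j, Classical.arbitrary _⟩, by simp [mem_commonNeighbors, hj.symm, ← hpart]⟩
    rw [dist, (edist_eq_two_iff (G := completeMultipartiteGraph V)).2
      ⟨huv, by simp [hpart], hcommon⟩]
    rfl
  · exact dist_eq_one_iff_adj.2 hpart

section CompleteMultipartite

open Matrix

variable {ι : Type*} [Fintype ι] [DecidableEq ι] [Nontrivial ι] {V : ι → Type*}
  [∀ i, Fintype (V i)] [∀ i, DecidableEq (V i)] [∀ i, Nonempty (V i)]

theorem scalar_sub_distMatrix_completeMultipartiteGraph (r : ℝ) :
    scalar _ r - distMatrix (SimpleGraph.completeMultipartiteGraph V) =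
      blockDiagonal' (fun i => (r + 2) • (1 : Matrix (V i) (V i) ℝ) - of fun _ _ => 1) -
        of fun _ _ => 1 := by
  ext ⟨i, x⟩ ⟨j, y⟩
  simp only [distMatrix, Matrix.sub_apply, of_apply, scalar_apply, diagonal_apply,
    SimpleGraph.completeMultipartiteGraph_dist]
  by_cases hij : i = j
  · subst hij
    by_cases hxy : x = y
    · subst hxy; simp [sub_sub, one_add_one_eq_two]
    · norm_num [hxy, one_apply]
  · simp [hij, blockDiagonal'_apply_ne _ _ _ hij]

theorem det_scalar_sub_distMatrix_completeMultipartiteGraph {r : ℝ} (h₀ : r + 2 ≠ 0)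
    (hV : ∀ i, r + 2 ≠ Fintype.card (V i)) :
    (scalar _ r - distMatrix (SimpleGraph.completeMultipartiteGraph V)).det =
      (∏ i, (r + 2) ^ (Fintype.card (V i) - 1) * (r + 2 - Fintype.card (V i))) *
        (1 - ∑ i, Fintype.card (V i) / (r + 2 - Fintype.card (V i))) := by
  -- Going through `c` keeps the instance `Fintype (V u.1)` out of the summands, so that
  -- `Finset.sum_const` applies after `Fintype.sum_sigma`.
  set c : ι → ℝ := fun i => (r + 2 - Fintype.card (V i))⁻¹ with hc
  rw [scalar_sub_distMatrix_completeMultipartiteGraph,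
    det_sub_ones_of_mulVec_eq_one (w := fun u => c u.1), det_blockDiagonal']
  · congr 1
    · exact Finset.prod_congr rfl fun i _ => det_smul_one_sub_ones h₀
    · simp only [Fintype.sum_sigma, Finset.sum_const, Finset.card_univ, nsmul_eq_mul]
      simp only [hc, div_eq_mul_inv]
  · ext ⟨i, x⟩
    rw [mulVec, dotProduct, Fintype.sum_sigma, Finset.sum_eq_single i
      (fun j _ hj => by simp [blockDiagonal'_apply_ne _ _ _ hj.symm]) (by simp)]
    simp only [blockDiagonal'_apply_eq, Matrix.sub_apply, Matrix.smul_apply, one_apply, smul_eq_mul,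
      mul_ite, mul_one, mul_zero, of_apply, hc, sub_mul, ite_mul, zero_mul, one_mul,
      Finset.sum_sub_distrib, Finset.sum_ite_eq, Finset.mem_univ, ↓reduceIte, Finset.sum_const,
      Finset.card_univ, nsmul_eq_mul, Pi.one_apply]
    rw [← sub_mul, mul_inv_cancel₀ (sub_ne_zero.2 (hV i))]

end CompleteMultipartite

theorem metacyclic_det_factorization {K : Type*} [Field K] {m n : ℕ} (hm : 2 ≤ m) (hn : 1 ≤ n)
    {a : K} (h₁ : a - ((m - 1 : ℕ) : K) * n ≠ 0) (h₂ : a - n ≠ 0) :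
    a ^ ((m - 1) * n - 1) * (a - ((m - 1 : ℕ) : K) * n) * (a ^ (n - 1) * (a - n)) ^ m *
        (1 - (((m - 1 : ℕ) : K) * n / (a - ((m - 1 : ℕ) : K) * n) + m * (n / (a - n)))) =
      a ^ (2 * m * n - (m + n) - 1) * (a - n) ^ (m - 1) *
        (a ^ 2 - (3 * m - 1) * n * a + (m - 1) * (m + 2) * n ^ 2) := by
  have hexp : 2 * m * n - (m + n) - 1 = ((m - 1) * n - 1) + (n - 1) * m := by
    have : 2 * n ≤ m * n := Nat.mul_le_mul_right n hm
    have : m ≤ m * n := Nat.le_mul_of_pos_right m hn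
    rw [Nat.sub_one_mul, Nat.sub_one_mul, mul_comm n m, mul_assoc]
    omega
  rw [Nat.cast_sub (by omega : 1 ≤ m)] at h₁ ⊢
  rw [hexp, pow_add, mul_pow, ← pow_mul, ← mul_pow_sub_one (by omega : m ≠ 0) (a - n)]
  field_simp
  ring

theorem eval_charpoly_distMatrix_metacyclic {m n : ℕ} (hm : 2 ≤ m) (hn : 1 ≤ n) {r : ℝ}
    (h₀ : r + 2 ≠ 0) (h₁ : r + 2 - ((m - 1 : ℕ) : ℝ) * n ≠ 0) (h₂ : r + 2 - n ≠ 0) :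
    (distMatrix (SimpleGraph.completeMultipartiteGraph
        fun i : Fin (m + 1) => Fin (if i = 0 then (m - 1) * n else n))).charpoly.eval r =
      (r + 2) ^ (2 * m * n - (m + n) - 1) * (r + 2 - n) ^ (m - 1) *
        ((r + 2) ^ 2 - (3 * m - 1) * n * (r + 2) + (m - 1) * (m + 2) * n ^ 2) := by
  have : Nontrivial (Fin (m + 1)) := Fin.nontrivial_iff_two_le.2 (by omega)
  have : ∀ i : Fin (m + 1), Nonempty (Fin (if i = 0 then (m - 1) * n else n)) := fun i => by
    split_ifs
    exacts [⟨⟨0, Nat.mul_pos (by omega) hn⟩⟩, ⟨⟨0, hn⟩⟩]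
  rw [Matrix.eval_charpoly,
    det_scalar_sub_distMatrix_completeMultipartiteGraph h₀ (Fin.cases ?_ fun i => ?_)]
  · simp only [Fintype.card_fin, Nat.cast_ite, Nat.cast_mul, Fin.prod_univ_succ, ↓reduceIte,
      Fin.succ_ne_zero, Finset.prod_const, Finset.card_univ, Fin.sum_univ_succ, Finset.sum_const,
      nsmul_eq_mul]
    exact metacyclic_det_factorization hm hn h₁ h₂
  · simpa [sub_eq_zero] using h₁
  · simpa [sub_eq_zero, Fin.succ_ne_zero] using h₂

theorem distance_spectrum_metacyclic_odd (m n : ℕ) (hm : 2 < m)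
    (hn : 1 ≤ n) :
    (distMatrix (SimpleGraph.completeMultipartiteGraph
        fun i : Fin (m + 1) => Fin (if i = 0 then (m - 1) * n else n))).charpoly =
      (X + 2) ^ (2 * m * n - (m + n) - 1) * (X - C ((n : ℝ) - 2)) ^ (m - 1) *
        (X - C ((-(4 + (n : ℝ) - 3 * m * n) +
          n * Real.sqrt (5 * (m : ℝ) ^ 2 - 10 * m + 9)) / 2)) *
        (X - C ((-(4 + (n : ℝ) - 3 * m * n) -
          n * Real.sqrt (5 * (m : ℝ) ^ 2 - 10 * m + 9)) / 2)) := by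
  have hsqrt := Real.sq_sqrt (by nlinarith [sq_nonneg ((m : ℝ) - 1)] :
    (0 : ℝ) ≤ 5 * (m : ℝ) ^ 2 - 10 * m + 9)
  apply Polynomial.eq_of_infinite_eval_eq
  refine Set.Infinite.mono (s := ({-2, (n : ℝ) - 2, ((m - 1 : ℕ) : ℝ) * n - 2} : Set ℝ)ᶜ)
    (fun r hr => ?_) (Set.toFinite _).infinite_compl
  simp only [Set.mem_compl_iff, Set.mem_insert_iff, Set.mem_singleton_iff, not_or] at hr
  obtain ⟨h₀, h₂, h₁⟩ := hr
  rw [Set.mem_ofPred_eq, eval_charpoly_distMatrix_metacyclic hm.le hn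
    (by contrapose! h₀; linarith) (by contrapose! h₁; linarith) (by contrapose! h₂; linarith)]
  simp only [eval_mul, eval_pow, eval_add, eval_sub, eval_X, eval_C, eval_ofNat]
  linear_combination
    ((r + 2) ^ (2 * m * n - (m + n) - 1) * (r + 2 - n) ^ (m - 1) * n ^ 2 / 4) * hsqrt
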